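/- With the notation above, TR ∘ Λ = τ: for every nonnegative Γ-invariant operator T on L²(M̂), TR(λ ∘ T ∘ λ̂) = Tr(M_ρ ∘ T ∘ M_ρ) = τ(T), where τ(T) := Tr(M_χ ∘ T ∘ M_χ) is Atiyah's trace defined by the characteristic function χ of a fundamental domain and M_f denotes multiplication by f. -/

import Mathlib

/-!
The first identity is read off the diagonal: the `e`-component of `λ η` is `M_ρ η`, so
`λ̂ (δ_e ⊗ v) = M_ρ v`.

For the second, let `S = √T`, which is again `Γ`-invariant. For selfadjoint `B`,
`Tr(B T B) = Σᵢ ‖S B fᵢ‖² = Σᵢ ‖B S fᵢ‖²`, because an operator and its adjoint have the same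
Hilbert–Schmidt sum. Insert the partition of unity `Σ_g ρ(g·)² = 1` into `‖M_χ S fᵢ‖²`, move the
translations onto the basis using the invariance of `S`, and use that the Hilbert–Schmidt sum does
not depend on the basis: what is left is `Σ_g ‖M_χ U_g (M_ρ S fᵢ)‖²`, which is `‖M_ρ S fᵢ‖²`
because almost every orbit meets the fundamental domain exactly once.
-/

open MeasureTheory ContinuousLinearMap
open scoped ENNReal

/-- The trace `TR` on operators on `ℓ²(Γ, ℋ)` determined by an orthonormal basis of `ℋ`:
`TR(T) = Σ_i ⟨T(δ_e ⊗ f_i), δ_e ⊗ f_i⟩`. -/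
noncomputable def crossedTR {Γ : Type*} [Group Γ] [DecidableEq Γ]
    {H : Type*} [NormedAddCommGroup H] [InnerProductSpace ℂ H] [CompleteSpace H]
    (f : HilbertBasis ℕ ℂ H)
    (T : lp (fun _ : Γ => H) 2 →L[ℂ] lp (fun _ : Γ => H) 2) : ℝ≥0∞ :=
  ∑' i : ℕ,
    ENNReal.ofReal
      ((inner ℂ (T (lp.single 2 (1 : Γ) (f i))) (lp.single 2 (1 : Γ) (f i)) : ℂ).re)

/-- The usual trace on `B(ℋ)` (for nonnegative operators), via an orthonormal basis. -/
noncomputable def basisTR {H : Type*} [NormedAddCommGroup H] [InnerProductSpace ℂ H]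
    [CompleteSpace H] (f : HilbertBasis ℕ ℂ H) (T : H →L[ℂ] H) : ℝ≥0∞ :=
  ∑' i : ℕ, ENNReal.ofReal ((inner ℂ (T (f i)) (f i) : ℂ).re)

open scoped InnerProductSpace

namespace HilbertBasis

variable {ι κ 𝕜 E F : Type*} [RCLike 𝕜] [NormedAddCommGroup E] [InnerProductSpace 𝕜 E]
  [NormedAddCommGroup F] [InnerProductSpace 𝕜 F]

protected noncomputable def map (b : HilbertBasis ι 𝕜 E) (U : E ≃ₗᵢ[𝕜] F) : HilbertBasis ι 𝕜 F :=
  ⟨U.symm.trans b.repr⟩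

@[simp]
theorem map_apply (b : HilbertBasis ι 𝕜 E) (U : E ≃ₗᵢ[𝕜] F) (i : ι) : b.map U i = U (b i) :=
  rfl

theorem tsum_enorm_inner_sq (b : HilbertBasis ι 𝕜 E) (x : E) :
    ∑' i, ‖⟪b i, x⟫_𝕜‖ₑ ^ 2 = ‖x‖ₑ ^ 2 := by
  have h := lp.hasSum_norm (p := 2) (by norm_num) (b.repr x)
  simp only [b.repr_apply_apply, LinearIsometryEquiv.norm_map, ENNReal.toReal_ofNat,
    Real.rpow_ofNat] at h
  have h' : HasSum (fun i => ‖⟪b i, x⟫_𝕜‖₊ ^ 2) (‖x‖₊ ^ 2) := by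
    rw [← NNReal.hasSum_coe]; simpa using h
  simp only [enorm_eq_nnnorm, ← ENNReal.coe_pow, ← ENNReal.coe_tsum h'.summable, h'.tsum_eq]

theorem tsum_enorm_apply_sq_eq_adjoint [CompleteSpace E] [CompleteSpace F]
    (b : HilbertBasis ι 𝕜 E) (c : HilbertBasis κ 𝕜 F) (A : E →L[𝕜] F) :
    ∑' i, ‖A (b i)‖ₑ ^ 2 = ∑' j, ‖adjoint A (c j)‖ₑ ^ 2 := by
  calc ∑' i, ‖A (b i)‖ₑ ^ 2 = ∑' i, ∑' j, ‖⟪c j, A (b i)⟫_𝕜‖ₑ ^ 2 := by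
        simp_rw [c.tsum_enorm_inner_sq]
    _ = ∑' j, ∑' i, ‖⟪b i, adjoint A (c j)⟫_𝕜‖ₑ ^ 2 := by
        rw [ENNReal.tsum_comm]
        refine tsum_congr fun j => tsum_congr fun i => ?_
        rw [adjoint_inner_right, ← inner_conj_symm, RCLike.enorm_conj]
    _ = ∑' j, ‖adjoint A (c j)‖ₑ ^ 2 := by simp_rw [b.tsum_enorm_inner_sq]

theorem tsum_enorm_apply_sq_eq [CompleteSpace E] [CompleteSpace F]
    (b : HilbertBasis ι 𝕜 E) (b' : HilbertBasis κ 𝕜 E) (A : E →L[𝕜] F) :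
    ∑' i, ‖A (b i)‖ₑ ^ 2 = ∑' j, ‖A (b' j)‖ₑ ^ 2 := by
  obtain ⟨w, c, -⟩ := exists_hilbertBasis 𝕜 F
  rw [b.tsum_enorm_apply_sq_eq_adjoint c, b'.tsum_enorm_apply_sq_eq_adjoint c]

end HilbertBasis

section Trace

variable {H : Type*} [NormedAddCommGroup H] [InnerProductSpace ℂ H] [CompleteSpace H]

theorem crossedTR_comp_comp_adjoint {Γ : Type*} [Group Γ] [DecidableEq Γ]
    (f : HilbertBasis ℕ ℂ H) (L : H →L[ℂ] lp (fun _ : Γ => H) 2) (C : H →L[ℂ] H)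
    (hL : ∀ η, L η 1 = C η) (T : H →L[ℂ] H) :
    crossedTR f (L ∘L T ∘L adjoint L) = basisTR f (C ∘L T ∘L adjoint C) := by
  have hL' : ∀ v, adjoint L (lp.single 2 1 v) = adjoint C v := fun v =>
    ext_inner_right ℂ fun η => by
      rw [adjoint_inner_left, lp.inner_single_left, hL, adjoint_inner_left]
  refine tsum_congr fun i => ?_
  simp only [comp_apply]
  rw [← adjoint_inner_right, hL', adjoint_inner_right]

theorem sqrt_apply_comm {T U : H →L[ℂ] H} (h : ∀ x, T (U x) = U (T x)) (x : H) :
    CFC.sqrt T (U x) = U (CFC.sqrt T x) := by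
  have hTU : Commute T U := ContinuousLinearMap.ext h
  exact congr($((hTU.cfcₙ_nnreal NNReal.sqrt).eq) x)

theorem basisTR_comp_comp_eq_tsum_enorm_sq (f : HilbertBasis ℕ ℂ H) {T B : H →L[ℂ] H}
    (hT : 0 ≤ T) (hB : IsSelfAdjoint B) :
    basisTR f (B ∘L T ∘L B) = ∑' i, ‖B (CFC.sqrt T (f i))‖ₑ ^ 2 := by
  set S := CFC.sqrt T
  have hS : IsSelfAdjoint S := (CFC.sqrt_nonneg T).isSelfAdjoint
  have hterm : ∀ x, ENNReal.ofReal (⟪(B ∘L T ∘L B) x, x⟫_ℂ).re = ‖(S ∘L B) x‖ₑ ^ 2 := by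
    intro x
    have hSS : T (B x) = S (S (B x)) := by
      rw [← CFC.sqrt_mul_sqrt_self T hT]; rfl
    have hinner : ⟪B (T (B x)), x⟫_ℂ = ⟪S (B x), S (B x)⟫_ℂ :=
      calc ⟪B (T (B x)), x⟫_ℂ = ⟪S (S (B x)), B x⟫_ℂ := by rw [← hSS]; exact hB.isSymmetric _ _
        _ = ⟪S (B x), S (B x)⟫_ℂ := hS.isSymmetric _ _
    rw [comp_apply, comp_apply, hinner, ← RCLike.re_to_complex, inner_self_eq_norm_sq,
      ENNReal.ofReal_pow (norm_nonneg _), ofReal_norm, comp_apply]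
  calc basisTR f (B ∘L T ∘L B) = ∑' i, ‖(S ∘L B) (f i)‖ₑ ^ 2 := tsum_congr fun i => hterm (f i)
    _ = ∑' i, ‖adjoint (S ∘L B) (f i)‖ₑ ^ 2 := f.tsum_enorm_apply_sq_eq_adjoint f _
    _ = ∑' i, ‖B (S (f i))‖ₑ ^ 2 := by rw [adjoint_comp, hB.adjoint_eq, hS.adjoint_eq]; rfl

end Trace

section L2

variable {M : Type*} [MeasurableSpace M] {μ : Measure M}

theorem MeasureTheory.Lp.enorm_sq_eq_lintegral {E : Type*} [NormedAddCommGroup E]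
    (u : Lp E 2 μ) : ‖u‖ₑ ^ 2 = ∫⁻ m, ‖u m‖ₑ ^ 2 ∂μ := by
  simpa [Lp.enorm_def] using eLpNorm_nnreal_pow_eq_lintegral (f := u) (μ := μ) (p := 2) two_ne_zero

theorem isSelfAdjoint_of_ae_eq_mul {B : Lp ℂ 2 μ →L[ℂ] Lp ℂ 2 μ} {w : M → ℂ}
    (hB : ∀ η : Lp ℂ 2 μ, B η =ᵐ[μ] fun m => w m * η m) (hw : ∀ m, star (w m) = w m) :
    IsSelfAdjoint B := by
  refine (isSelfAdjoint_iff' ..).2 ((eq_adjoint_iff B B).2 fun x y => ?_).symm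
  rw [L2.inner_def, L2.inner_def]
  refine integral_congr_ae ?_
  filter_upwards [hB x, hB y] with m hx hy
  simp only [RCLike.inner_apply, hx, hy, map_mul]
  rw [show (starRingEnd ℂ) (w m) = w m from hw m]
  ring

end L2

section Action

variable {Γ : Type*} [Group Γ] {M : Type*} [MeasurableSpace M] {μ : Measure M}
  {a : Γ → M → M}

theorem translate_mul_translate_inv_ae_eq {g : Γ}
    (hg : Measure.QuasiMeasurePreserving (a g) μ μ)
    (hinv : ∀ m, a g⁻¹ (a g m) = m) {UL : Γ → Lp ℂ 2 μ ≃ₗᵢ[ℂ] Lp ℂ 2 μ}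
    (hUL : ∀ g (η : Lp ℂ 2 μ), UL g η =ᵐ[μ] fun m => η (a g m))
    {B : Lp ℂ 2 μ →L[ℂ] Lp ℂ 2 μ} {w : M → ℂ}
    (hB : ∀ η : Lp ℂ 2 μ, B η =ᵐ[μ] fun m => w m * η m) (v : Lp ℂ 2 μ) :
    UL g (B (UL g⁻¹ v)) =ᵐ[μ] fun m => w (a g m) * v m := by
  filter_upwards [hUL g (B (UL g⁻¹ v)), hg.ae_eq (hB (UL g⁻¹ v)), hg.ae_eq (hUL g⁻¹ v)]
    with m h1 h2 h3
  simp only [Function.comp_apply] at h2 h3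
  rw [h1, h2, h3, hinv]

theorem enorm_sq_eq_tsum_enorm_sq_cutoff_translate [Countable Γ]
    (hmp : ∀ g, MeasurePreserving (a g) μ μ) (hinv : ∀ g m, a g⁻¹ (a g m) = m)
    {UL : Γ → Lp ℂ 2 μ ≃ₗᵢ[ℂ] Lp ℂ 2 μ}
    (hUL : ∀ g (η : Lp ℂ 2 μ), UL g η =ᵐ[μ] fun m => η (a g m))
    {ρ : M → ℝ} (hsum : ∀ m, ∑' g, ρ (a g m) ^ 2 = 1)
    {Mρ : Lp ℂ 2 μ →L[ℂ] Lp ℂ 2 μ} (hMρ : ∀ η : Lp ℂ 2 μ, Mρ η =ᵐ[μ] fun m => (ρ m : ℂ) * η m)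
    {C : Lp ℂ 2 μ →L[ℂ] Lp ℂ 2 μ} {c : M → ℂ}
    (hC : ∀ η : Lp ℂ 2 μ, C η =ᵐ[μ] fun m => c m * η m)
    (v : Lp ℂ 2 μ) :
    ‖C v‖ₑ ^ 2 = ∑' g, ‖C (UL g (Mρ (UL g⁻¹ v)))‖ₑ ^ 2 := by
  have hsum' : ∀ m, ∑' g, ENNReal.ofReal (ρ (a g m) ^ 2) = 1 := by
    intro m
    have hs : Summable fun g => ρ (a g m) ^ 2 := by
      by_contra h
      simpa [tsum_eq_zero_of_not_summable h] using hsum m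
    rw [← ENNReal.ofReal_tsum_of_nonneg (fun _ => sq_nonneg _) hs, hsum m, ENNReal.ofReal_one]
  have hpt : ∀ᵐ m ∂μ, ∀ g, ‖C (UL g (Mρ (UL g⁻¹ v))) m‖ₑ ^ 2
      = ENNReal.ofReal (ρ (a g m) ^ 2) * ‖C v m‖ₑ ^ 2 := by
    rw [ae_all_iff]
    intro g
    filter_upwards [hC (UL g (Mρ (UL g⁻¹ v))), hC v,
      translate_mul_translate_inv_ae_eq (hmp g).quasiMeasurePreserving (hinv g) hUL hMρ v]
      with m h1 h3 h2
    rw [h1, h2, h3, mul_left_comm, enorm_mul, mul_pow, enorm_eq_nnnorm (ρ _ : ℂ),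
      Complex.nnnorm_real, ← enorm_eq_nnnorm, Real.enorm_eq_ofReal_abs,
      ← ENNReal.ofReal_pow (abs_nonneg _), sq_abs]
  simp_rw [Lp.enorm_sq_eq_lintegral]
  rw [← lintegral_tsum fun g => (Lp.aestronglyMeasurable _).enorm.pow_const 2]
  refine lintegral_congr_ae ?_
  filter_upwards [hpt] with m hm
  rw [tsum_congr hm, ENNReal.tsum_mul_right, hsum', one_mul]

theorem tsum_enorm_sq_indicator_translate [Countable Γ]
    (hmp : ∀ g, MeasurePreserving (a g) μ μ) (hinv : ∀ g m, a g⁻¹ (a g m) = m)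
    {U : Set M} (hfund : ∀ᵐ m ∂μ, ∃! g, a g m ∈ U)
    {UL : Γ → Lp ℂ 2 μ ≃ₗᵢ[ℂ] Lp ℂ 2 μ}
    (hUL : ∀ g (η : Lp ℂ 2 μ), UL g η =ᵐ[μ] fun m => η (a g m))
    {Mχ : Lp ℂ 2 μ →L[ℂ] Lp ℂ 2 μ}
    (hMχ : ∀ η : Lp ℂ 2 μ, Mχ η =ᵐ[μ] fun m => U.indicator (fun _ => (1 : ℂ)) m * η m)
    (w : Lp ℂ 2 μ) :
    ∑' g, ‖Mχ (UL g w)‖ₑ ^ 2 = ‖w‖ₑ ^ 2 := by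
  set G : Γ → M → ℝ≥0∞ := fun g m => ‖Mχ (UL g w) m‖ₑ ^ 2
  have hGmeas : ∀ g, AEMeasurable (G g) μ := fun g =>
    (Lp.aestronglyMeasurable _).enorm.pow_const 2
  have hchange : ∀ g, ‖Mχ (UL g w)‖ₑ ^ 2 = ∫⁻ m, G g (a g⁻¹ m) ∂μ := by
    intro g
    rw [Lp.enorm_sq_eq_lintegral, ← lintegral_map' (by rw [(hmp g⁻¹).map_eq]; exact hGmeas g)
      (hmp g⁻¹).measurable.aemeasurable, (hmp g⁻¹).map_eq]
  have hG : ∀ᵐ m ∂μ, ∀ g, G g (a g⁻¹ m) = U.indicator (fun _ => 1) (a g⁻¹ m) * ‖w m‖ₑ ^ 2 := by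
    rw [ae_all_iff]
    intro g
    have hg := (hmp g⁻¹).quasiMeasurePreserving
    filter_upwards [hg.ae_eq (hMχ (UL g w)), hg.ae_eq (hUL g w)] with m h1 h2
    have hinv' : a g (a g⁻¹ m) = m := by simpa using hinv g⁻¹ m
    simp only [Function.comp_apply, hinv'] at h1 h2
    by_cases hm : a g⁻¹ m ∈ U <;> simp [G, h1, h2, hm]
  have hcount : ∀ᵐ m ∂μ, ∑' g : Γ, U.indicator (fun _ => (1 : ℝ≥0∞)) (a g⁻¹ m) = 1 := by
    filter_upwards [hfund] with m ⟨g₀, hg₀, huniq⟩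
    rw [tsum_eq_single g₀⁻¹ fun g hg => Set.indicator_of_notMem
      (fun hmem => hg (by rw [← huniq _ hmem, inv_inv])) _, inv_inv, Set.indicator_of_mem hg₀]
  calc ∑' g, ‖Mχ (UL g w)‖ₑ ^ 2 = ∫⁻ m, ∑' g, G g (a g⁻¹ m) ∂μ := by
        rw [lintegral_tsum (f := fun g m => G g (a g⁻¹ m)) fun g =>
          (hGmeas g).comp_quasiMeasurePreserving (hmp g⁻¹).quasiMeasurePreserving]
        exact tsum_congr hchange
    _ = ∫⁻ m, ‖w m‖ₑ ^ 2 ∂μ := by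
        refine lintegral_congr_ae ?_
        filter_upwards [hG, hcount] with m h1 h2
        rw [tsum_congr h1, ENNReal.tsum_mul_right, h2, one_mul]
    _ = ‖w‖ₑ ^ 2 := (Lp.enorm_sq_eq_lintegral w).symm

theorem tsum_enorm_sq_indicator_eq_tsum_enorm_sq_cutoff [Countable Γ] {ι : Type*}
    (hmp : ∀ g, MeasurePreserving (a g) μ μ) (hinv : ∀ g m, a g⁻¹ (a g m) = m)
    {U : Set M} (hfund : ∀ᵐ m ∂μ, ∃! g, a g m ∈ U)
    {ρ : M → ℝ} (hsum : ∀ m, ∑' g, ρ (a g m) ^ 2 = 1)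
    {UL : Γ → Lp ℂ 2 μ ≃ₗᵢ[ℂ] Lp ℂ 2 μ}
    (hUL : ∀ g (η : Lp ℂ 2 μ), UL g η =ᵐ[μ] fun m => η (a g m))
    {Mχ : Lp ℂ 2 μ →L[ℂ] Lp ℂ 2 μ}
    (hMχ : ∀ η : Lp ℂ 2 μ, Mχ η =ᵐ[μ] fun m => U.indicator (fun _ => (1 : ℂ)) m * η m)
    {Mρ : Lp ℂ 2 μ →L[ℂ] Lp ℂ 2 μ} (hMρ : ∀ η : Lp ℂ 2 μ, Mρ η =ᵐ[μ] fun m => (ρ m : ℂ) * η m)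
    {S : Lp ℂ 2 μ →L[ℂ] Lp ℂ 2 μ} (hS : ∀ g η, S (UL g η) = UL g (S η))
    (b : HilbertBasis ι ℂ (Lp ℂ 2 μ)) :
    ∑' i, ‖Mχ (S (b i))‖ₑ ^ 2 = ∑' i, ‖Mρ (S (b i))‖ₑ ^ 2 := by
  let A : Γ → Lp ℂ 2 μ →L[ℂ] Lp ℂ 2 μ := fun g =>
    Mχ ∘L ((UL g).toContinuousLinearEquiv : Lp ℂ 2 μ →L[ℂ] Lp ℂ 2 μ) ∘L Mρ ∘L S
  calc ∑' i, ‖Mχ (S (b i))‖ₑ ^ 2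
      = ∑' i, ∑' g, ‖Mχ (UL g (Mρ (UL g⁻¹ (S (b i)))))‖ₑ ^ 2 :=
        tsum_congr fun i => enorm_sq_eq_tsum_enorm_sq_cutoff_translate hmp hinv hUL hsum hMρ hMχ _
    _ = ∑' g, ∑' i, ‖A g (b.map (UL g⁻¹) i)‖ₑ ^ 2 := by
        rw [ENNReal.tsum_comm]
        simp [A, hS]
    _ = ∑' g, ∑' i, ‖A g (b i)‖ₑ ^ 2 :=
        tsum_congr fun g => (b.map _).tsum_enorm_apply_sq_eq b (A g)
    _ = ∑' i, ‖Mρ (S (b i))‖ₑ ^ 2 := by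
        rw [ENNReal.tsum_comm]
        simp [A, tsum_enorm_sq_indicator_translate hmp hinv hfund hUL hMχ]

end Action

theorem TR_comp_Lambda_eq_tau_general {Γ : Type*} [Group Γ] [Countable Γ] [DecidableEq Γ]
    {M : Type*} [MeasurableSpace M] (μ : Measure M)
    (a : Γ → M → M)
    (hmp : ∀ g : Γ, MeasurePreserving (a g) μ μ)
    (hone : ∀ m, a 1 m = m)
    (hmulact : ∀ (g h : Γ) (m : M), a (g * h) m = a h (a g m))
    -- the fundamental domain Û with characteristic function χ
    (Uf : Set M)
    (hfund : ∀ᵐ m ∂μ, ∃! g : Γ, a g m ∈ Uf)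
    -- the cutoff ρ
    (ρ : M → ℝ)
    (hsum : ∀ m, ∑' g : Γ, (ρ (a g m)) ^ 2 = 1)
    -- the unitaries induced by the action
    (UL : Γ → (Lp ℂ 2 μ ≃ₗᵢ[ℂ] Lp ℂ 2 μ))
    (hUL : ∀ (g : Γ) (η : Lp ℂ 2 μ),
      ((UL g η : Lp ℂ 2 μ) : M → ℂ) =ᵐ[μ] fun m => (η : M → ℂ) (a g m))
    -- λ and λ̂
    (lam : Lp ℂ 2 μ →L[ℂ] lp (fun _ : Γ => Lp ℂ 2 μ) 2)
    (hlam : ∀ (η : Lp ℂ 2 μ) (g : Γ),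
      (((lam η : lp (fun _ : Γ => Lp ℂ 2 μ) 2) : ∀ _ : Γ, Lp ℂ 2 μ) g : M → ℂ)
        =ᵐ[μ] fun m => (ρ m : ℂ) * (η : M → ℂ) (a g m))
    (hat : lp (fun _ : Γ => Lp ℂ 2 μ) 2 →L[ℂ] Lp ℂ 2 μ)
    (hhat : hat = ContinuousLinearMap.adjoint lam)
    -- the multiplication operators M_χ and M_ρ
    (Mchi : Lp ℂ 2 μ →L[ℂ] Lp ℂ 2 μ)
    (hMchi : ∀ η : Lp ℂ 2 μ,
      ((Mchi η : Lp ℂ 2 μ) : M → ℂ) =ᵐ[μ]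
        fun m => (Set.indicator Uf (fun _ => (1 : ℂ)) m) * (η : M → ℂ) m)
    (Mrho : Lp ℂ 2 μ →L[ℂ] Lp ℂ 2 μ)
    (hMrho : ∀ η : Lp ℂ 2 μ,
      ((Mrho η : Lp ℂ 2 μ) : M → ℂ) =ᵐ[μ] fun m => (ρ m : ℂ) * (η : M → ℂ) m)
    -- an orthonormal basis of L²(M̂)
    (f : HilbertBasis ℕ ℂ (Lp ℂ 2 μ)) :
    ∀ T : Lp ℂ 2 μ →L[ℂ] Lp ℂ 2 μ,
      (∀ (g : Γ) (η : Lp ℂ 2 μ), T (UL g η) = UL g (T η)) →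
      T.IsPositive →
      crossedTR f (lam ∘L T ∘L hat) = basisTR f (Mrho ∘L T ∘L Mrho) ∧
      basisTR f (Mrho ∘L T ∘L Mrho) = basisTR f (Mchi ∘L T ∘L Mchi) := by
  intro T hTcomm hTpos
  subst hhat
  have hT : 0 ≤ T := (nonneg_iff_isPositive T).2 hTpos
  have hinv : ∀ g m, a g⁻¹ (a g m) = m := fun g m => by rw [← hmulact, mul_inv_cancel, hone]
  have hMrho_sa : IsSelfAdjoint Mrho :=
    isSelfAdjoint_of_ae_eq_mul hMrho fun m => Complex.conj_ofReal _
  have hMchi_sa : IsSelfAdjoint Mchi :=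
    isSelfAdjoint_of_ae_eq_mul hMchi fun m => by by_cases hm : m ∈ Uf <;> simp [hm]
  have hlam_one : ∀ η, lam η 1 = Mrho η := fun η => Lp.ext <| by
    filter_upwards [hlam η 1, hMrho η] with m h1 h2
    rw [h1, h2, hone]
  refine ⟨?_, ?_⟩
  · rw [crossedTR_comp_comp_adjoint f lam Mrho hlam_one, hMrho_sa.adjoint_eq]
  · rw [basisTR_comp_comp_eq_tsum_enorm_sq f hT hMrho_sa,
      basisTR_comp_comp_eq_tsum_enorm_sq f hT hMchi_sa]
    exact (tsum_enorm_sq_indicator_eq_tsum_enorm_sq_cutoff hmp hinv hfund hsum hUL hMchi hMrho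
      (fun g => sqrt_apply_comm
        (U := ((UL g).toContinuousLinearEquiv : Lp ℂ 2 μ →L[ℂ] Lp ℂ 2 μ)) (hTcomm g)) f).symm

/-- `TR ∘ Λ = τ` : for every nonnegative `Γ`-invariant operator `T` on
`L²(M̂)`, `TR(λ ∘ T ∘ λ̂) = Tr(M_ρ ∘ T ∘ M_ρ) = Tr(M_χ ∘ T ∘ M_χ) = τ(T)`, where `χ` is
the characteristic function of a fundamental domain `Û` and `M_f` is multiplication
by `f`. -/
theorem TR_comp_Lambda_eq_tau {Γ : Type*} [Group Γ] [Countable Γ] [DecidableEq Γ]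
    {M : Type*} [MeasurableSpace M] (μ : Measure M)
    (a : Γ → M → M)
    (hmp : ∀ g : Γ, MeasurePreserving (a g) μ μ)
    (hone : ∀ m, a 1 m = m)
    (hmulact : ∀ (g h : Γ) (m : M), a (g * h) m = a h (a g m))
    (hfree : ∀ g : Γ, g ≠ 1 → ∀ m, a g m ≠ m)
    -- the fundamental domain Û with characteristic function χ
    (Uf : Set M) (hUf : MeasurableSet Uf)
    (hfund : ∀ᵐ m ∂μ, ∃! g : Γ, a g m ∈ Uf)
    -- the cutoff ρ
    (ρ : M → ℝ) (hρ : ∀ m, ρ m ∈ Set.Icc (0 : ℝ) 1)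
    (hsum : ∀ m, ∑' g : Γ, (ρ (a g m)) ^ 2 = 1)
    -- the unitaries induced by the action
    (UL : Γ → (Lp ℂ 2 μ ≃ₗᵢ[ℂ] Lp ℂ 2 μ))
    (hUL : ∀ (g : Γ) (η : Lp ℂ 2 μ),
      ((UL g η : Lp ℂ 2 μ) : M → ℂ) =ᵐ[μ] fun m => (η : M → ℂ) (a g m))
    -- λ and λ̂
    (lam : Lp ℂ 2 μ →L[ℂ] lp (fun _ : Γ => Lp ℂ 2 μ) 2)
    (hlam : ∀ (η : Lp ℂ 2 μ) (g : Γ),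
      (((lam η : lp (fun _ : Γ => Lp ℂ 2 μ) 2) : ∀ _ : Γ, Lp ℂ 2 μ) g : M → ℂ)
        =ᵐ[μ] fun m => (ρ m : ℂ) * (η : M → ℂ) (a g m))
    (hat : lp (fun _ : Γ => Lp ℂ 2 μ) 2 →L[ℂ] Lp ℂ 2 μ)
    (hhat : hat = ContinuousLinearMap.adjoint lam)
    -- the multiplication operators M_χ and M_ρ
    (Mchi : Lp ℂ 2 μ →L[ℂ] Lp ℂ 2 μ)
    (hMchi : ∀ η : Lp ℂ 2 μ,
      ((Mchi η : Lp ℂ 2 μ) : M → ℂ) =ᵐ[μ]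
        fun m => (Set.indicator Uf (fun _ => (1 : ℂ)) m) * (η : M → ℂ) m)
    (Mrho : Lp ℂ 2 μ →L[ℂ] Lp ℂ 2 μ)
    (hMrho : ∀ η : Lp ℂ 2 μ,
      ((Mrho η : Lp ℂ 2 μ) : M → ℂ) =ᵐ[μ] fun m => (ρ m : ℂ) * (η : M → ℂ) m)
    -- an orthonormal basis of L²(M̂)
    (f : HilbertBasis ℕ ℂ (Lp ℂ 2 μ)) :
    ∀ T : Lp ℂ 2 μ →L[ℂ] Lp ℂ 2 μ,
      (∀ (g : Γ) (η : Lp ℂ 2 μ), T (UL g η) = UL g (T η)) →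
      T.IsPositive →
      crossedTR f (lam ∘L T ∘L hat) = basisTR f (Mrho ∘L T ∘L Mrho) ∧
      basisTR f (Mrho ∘L T ∘L Mrho) = basisTR f (Mchi ∘L T ∘L Mchi) :=
  TR_comp_Lambda_eq_tau_general μ a hmp hone hmulact Uf hfund ρ hsum UL hUL lam hlam hat hhat Mchi
    hMchi Mrho hMrho f
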